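/- arXiv:0707.0286 — 4 statements merged into one kernel-verified Lean document; each statement's English description precedes it below -/
import Mathlib

section
/- Let G be a group and K a normal subgroup such that the quotient group G/K is cyclic. Then the inclusion [K,K]·G_3 ⊆ D_3(G,K) is an equality, where D_3(G,K) = {g ∈ G : g − 1 ∈ I(K)I(G) + I(G)^3} in the integral group ring ℤ(G). -/
open MonoidAlgebra

/-- The additive subgroup `I(K)I(G)` of `ℤ(G)` spanned by the elements `(k-1)(g-1)`,
`k ∈ K`, `g ∈ G`. -/
noncomputable def relAugMulKG {G : Type*} [Group G] (K : Subgroup G) :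
    Submodule ℤ (MonoidAlgebra ℤ G) :=
  Submodule.span ℤ {x | ∃ k ∈ K, ∃ g : G, x = (of ℤ G k - 1) * (of ℤ G g - 1)}

/-- The augmentation ideal `I(G)` of `ℤ(G)`, as a `ℤ`-submodule. -/
noncomputable def augmentationSubmodule (G : Type*) [Group G] : Submodule ℤ (MonoidAlgebra ℤ G) :=
  Submodule.span ℤ {x | ∃ g : G, x = of ℤ G g - 1}

/-- The third relative dimension subgroup
`D₃(G,K) = {g ∈ G | g - 1 ∈ I(K)I(G) + I(G)³}` (as a subset of `G`). -/
noncomputable def D3 {G : Type*} [Group G] (K : Subgroup G) : Set G :=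
  {g : G | of ℤ G g - 1 ∈ relAugMulKG K + augmentationSubmodule G ^ 3}

/-!
`J = I(K)I(G) + I(G)³` satisfies `J · I(G) ⊆ J`, so `{g | g - 1 ∈ J}` is a subgroup; it contains
the commutators generating `[K,K]` and `G₃`, which gives `[K,K]G₃ ⊆ D₃(G,K)`.

Conversely, let `φ : G → M` be a map to an abelian group with `φ(kg) = φ(k) + φ(g)` for `k ∈ K`
and vanishing third differences. Its linear extension to `ℤ(G)` kills `J`, so `φ(g) = 0` on
`D₃(G,K)`. Homomorphisms to abelian groups are such maps, whence `D₃(G,K) ⊆ G₂ ⊆ K`. Let `x` lift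
a generator of `G/K` and let `λ` be a `ℚ/ℤ`-valued character of `K/[K,K]G₃`. Writing
`g = k xⁱ` with `k ∈ K`, put `φ(g) = λ(k) + i ξ`, where `n ξ = λ(xⁿ)` for `n` the order of
`G/K` (`ℚ/ℤ` is divisible). Because `λ` kills `G₃`, `i ↦ λ[xⁱ, k]` is additive, and because it
kills `[K,K]`, it only depends on `xⁱ K`; together these make the third differences of `φ` vanish.
So every such `λ` vanishes on `D₃(G,K) ∩ K`, i.e. `D₃(G,K) ⊆ [K,K]G₃`.
-/

open scoped commutatorElement

section

variable {G : Type*} [Group G]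

lemma of_sub_one_mem_augmentationSubmodule (g : G) : of ℤ G g - 1 ∈ augmentationSubmodule G :=
  Submodule.subset_span ⟨g, rfl⟩

lemma of_mul_sub_one (a b : G) :
    of ℤ G (a * b) - 1 = (of ℤ G a - 1) * (of ℤ G b - 1) + (of ℤ G a - 1) + (of ℤ G b - 1) := by
  rw [map_mul]
  noncomm_ring

lemma of_sub_one_mul_of_sub_one (a b : G) :
    (of ℤ G a - 1) * (of ℤ G b - 1) = of ℤ G (a * b) - of ℤ G a - of ℤ G b + 1 := by
  rw [map_mul]
  noncomm_ring

lemma of_sub_one_mul_of_sub_one_mul_of_sub_one (a b c : G) :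
    (of ℤ G a - 1) * (of ℤ G b - 1) * (of ℤ G c - 1) =
      of ℤ G (a * b * c) - of ℤ G (a * b) - of ℤ G (a * c) - of ℤ G (b * c)
        + of ℤ G a + of ℤ G b + of ℤ G c - 1 := by
  simp only [map_mul]
  noncomm_ring

lemma of_inv_sub_one (a : G) :
    of ℤ G a⁻¹ - 1 = -((of ℤ G a - 1) * (of ℤ G a⁻¹ - 1)) - (of ℤ G a - 1) := by
  have h := of_mul_sub_one a a⁻¹
  rw [mul_inv_cancel, map_one, sub_self] at h
  rw [eq_sub_iff_add_eq, eq_neg_iff_add_eq_zero, h]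
  abel

lemma augmentationSubmodule_mul_le :
    augmentationSubmodule G * augmentationSubmodule G ≤ augmentationSubmodule G := by
  rw [augmentationSubmodule, Submodule.span_mul_span, Submodule.span_le]
  rintro _ ⟨_, ⟨a, rfl⟩, _, ⟨b, rfl⟩, rfl⟩
  dsimp only
  have h := of_mul_sub_one a b
  rw [eq_comm, add_assoc, ← eq_sub_iff_add_eq] at h
  rw [SetLike.mem_coe, h]
  exact sub_mem (of_sub_one_mem_augmentationSubmodule _)
    (add_mem (of_sub_one_mem_augmentationSubmodule a) (of_sub_one_mem_augmentationSubmodule b))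

lemma augmentationSubmodule_pow_succ_mul_le (n : ℕ) :
    augmentationSubmodule G ^ (n + 1) * augmentationSubmodule G ≤
      augmentationSubmodule G ^ (n + 1) := by
  rw [pow_succ, mul_assoc]
  exact mul_le_mul_right augmentationSubmodule_mul_le _

def dimensionSubgroup (J : Submodule ℤ (MonoidAlgebra ℤ G))
    (hJ : J * augmentationSubmodule G ≤ J) : Subgroup G where
  carrier := {g | of ℤ G g - 1 ∈ J}
  one_mem' := by simp only [Set.mem_ofPred_eq, map_one, sub_self, zero_mem]
  mul_mem' {a b} ha hb := by
    simp only [Set.mem_ofPred_eq, of_mul_sub_one] at *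
    exact add_mem (add_mem (hJ (Submodule.mul_mem_mul ha (of_sub_one_mem_augmentationSubmodule b)))
      ha) hb
  inv_mem' {a} ha := by
    simp only [Set.mem_ofPred_eq] at *
    rw [of_inv_sub_one]
    exact sub_mem (neg_mem (hJ (Submodule.mul_mem_mul ha (of_sub_one_mem_augmentationSubmodule _))))
      ha

section dimensionSubgroup

variable {J : Submodule ℤ (MonoidAlgebra ℤ G)} (hJ : J * augmentationSubmodule G ≤ J)

lemma mem_dimensionSubgroup {g : G} : g ∈ dimensionSubgroup J hJ ↔ of ℤ G g - 1 ∈ J := Iff.rfl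

lemma commutatorElement_mem_dimensionSubgroup {a b : G}
    (hab : (of ℤ G a - 1) * (of ℤ G b - 1) ∈ J) (hba : (of ℤ G b - 1) * (of ℤ G a - 1) ∈ J) :
    ⁅a, b⁆ ∈ dimensionSubgroup J hJ := by
  set D := (of ℤ G a - 1) * (of ℤ G b - 1) - (of ℤ G b - 1) * (of ℤ G a - 1) with hD_def
  have hD : D ∈ J := sub_mem hab hba
  -- `⁅a, b⁆ - 1 = (ab - ba)(ba)⁻¹`
  have key : of ℤ G ⁅a, b⁆ - 1 = D * (of ℤ G (b * a)⁻¹ - 1) + D := by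
    have hba1 : of ℤ G b * of ℤ G a * of ℤ G (b * a)⁻¹ = 1 := by
      rw [← map_mul, ← map_mul, mul_inv_cancel, map_one]
    calc of ℤ G ⁅a, b⁆ - 1
        = of ℤ G a * of ℤ G b * of ℤ G (b * a)⁻¹ - of ℤ G b * of ℤ G a * of ℤ G (b * a)⁻¹ := by
          rw [hba1, commutatorElement_def, ← map_mul, ← map_mul]
          congr 2
          group
      _ = D * (of ℤ G (b * a)⁻¹ - 1) + D := by rw [hD_def]; noncomm_ring
  rw [mem_dimensionSubgroup, key]
  exact add_mem (hJ (Submodule.mul_mem_mul hD (of_sub_one_mem_augmentationSubmodule _))) hD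

end dimensionSubgroup

lemma mul_mem_augmentationSubmodule_pow_succ {n : ℕ} {x : MonoidAlgebra ℤ G}
    (hx : x ∈ augmentationSubmodule G ^ n) (g : G) :
    x * (of ℤ G g - 1) ∈ augmentationSubmodule G ^ (n + 1) := by
  rw [pow_succ]
  exact Submodule.mul_mem_mul hx (of_sub_one_mem_augmentationSubmodule g)

lemma mul_mem_augmentationSubmodule_pow_succ' {n : ℕ} {x : MonoidAlgebra ℤ G}
    (hx : x ∈ augmentationSubmodule G ^ n) (g : G) :
    (of ℤ G g - 1) * x ∈ augmentationSubmodule G ^ (n + 1) := by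
  rw [pow_succ']
  exact Submodule.mul_mem_mul (of_sub_one_mem_augmentationSubmodule g) hx

lemma of_sub_one_mul_of_sub_one_mem_pow_two (a b : G) :
    (of ℤ G a - 1) * (of ℤ G b - 1) ∈ augmentationSubmodule G ^ 2 :=
  mul_mem_augmentationSubmodule_pow_succ (by simpa using of_sub_one_mem_augmentationSubmodule a) b

lemma commutator_le_dimensionSubgroup_pow_two :
    commutator G ≤ dimensionSubgroup _ (augmentationSubmodule_pow_succ_mul_le (G := G) 1) := by
  rw [commutator_def, Subgroup.commutator_le]
  intro a _ b _
  exact commutatorElement_mem_dimensionSubgroup _ (of_sub_one_mul_of_sub_one_mem_pow_two a b)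
    (of_sub_one_mul_of_sub_one_mem_pow_two b a)

section D3

variable (K : Subgroup G)

lemma relAugMulKG_mul_le :
    relAugMulKG K * augmentationSubmodule G ≤ augmentationSubmodule G ^ 3 := by
  rw [relAugMulKG, augmentationSubmodule, Submodule.span_mul_span, Submodule.span_le]
  rintro _ ⟨_, ⟨k, -, g, rfl⟩, _, ⟨c, rfl⟩, rfl⟩
  exact mul_mem_augmentationSubmodule_pow_succ (of_sub_one_mul_of_sub_one_mem_pow_two k g) c

lemma relAugMulKG_add_pow_three_mul_le :
    (relAugMulKG K + augmentationSubmodule G ^ 3) * augmentationSubmodule G ≤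
      relAugMulKG K + augmentationSubmodule G ^ 3 := by
  rw [Submodule.add_eq_sup, Submodule.sup_mul]
  exact sup_le_sup_right (relAugMulKG_mul_le K) _ |>.trans
    (sup_le le_sup_right (augmentationSubmodule_pow_succ_mul_le 2 |>.trans le_sup_right))

lemma D3_eq_dimensionSubgroup : D3 K = dimensionSubgroup _ (relAugMulKG_add_pow_three_mul_le K) :=
  rfl

lemma commutator_sup_lowerCentralSeries_two_subset_D3 :
    ↑(⁅K, K⁆ ⊔ (⊤ : Subgroup G).lowerCentralSeries 2) ⊆ D3 K := by
  rw [D3_eq_dimensionSubgroup, SetLike.coe_subset_coe, Subgroup.lowerCentralSeries_succ,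
    Subgroup.top_lowerCentralSeries_one]
  refine sup_le (Subgroup.commutator_le.2 fun a ha b hb ↦ ?_)
    (Subgroup.commutator_le.2 fun u hu g _ ↦ ?_)
  · exact commutatorElement_mem_dimensionSubgroup _
      (Submodule.mem_sup_left (Submodule.subset_span ⟨a, ha, b, rfl⟩))
      (Submodule.mem_sup_left (Submodule.subset_span ⟨b, hb, a, rfl⟩))
  · have hu2 := commutator_le_dimensionSubgroup_pow_two hu
    exact commutatorElement_mem_dimensionSubgroup _
      (Submodule.mem_sup_right (mul_mem_augmentationSubmodule_pow_succ hu2 g))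
      (Submodule.mem_sup_right (mul_mem_augmentationSubmodule_pow_succ' hu2 g))

end D3

section RelQuadraticMap

variable {M : Type*} [AddCommGroup M]

structure IsRelQuadraticMap (K : Subgroup G) (φ : G → M) : Prop where
  map_mul_left : ∀ k ∈ K, ∀ g, φ (k * g) = φ k + φ g
  map_mul_mul : ∀ a b c, φ (a * b * c) + φ a + φ b + φ c = φ (a * b) + φ (a * c) + φ (b * c)

noncomputable def linearExtension (φ : G → M) : MonoidAlgebra ℤ G →ₗ[ℤ] M :=
  Finsupp.linearCombination ℤ φ ∘ₗ (coeffLinearEquiv ℤ).toLinearMap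

@[simp]
lemma linearExtension_of (φ : G → M) (g : G) : linearExtension φ (of ℤ G g) = φ g := by
  simp [linearExtension, coeffLinearEquiv]

@[simp]
lemma linearExtension_one (φ : G → M) : linearExtension φ 1 = φ 1 := by
  rw [← map_one (of ℤ G), linearExtension_of]

namespace IsRelQuadraticMap

variable {K : Subgroup G} {φ : G → M}

lemma map_one (hφ : IsRelQuadraticMap K φ) : φ 1 = 0 := by
  simpa using hφ.map_mul_left 1 K.one_mem 1

lemma relAugMulKG_le_ker (hφ : IsRelQuadraticMap K φ) :
    relAugMulKG K ≤ LinearMap.ker (linearExtension φ) := by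
  rw [relAugMulKG, Submodule.span_le]
  rintro _ ⟨k, hk, g, rfl⟩
  simp only [SetLike.mem_coe, LinearMap.mem_ker, of_sub_one_mul_of_sub_one, map_add, map_sub,
    linearExtension_of, linearExtension_one, hφ.map_mul_left k hk g, hφ.map_one]
  abel

lemma augmentationSubmodule_pow_three_le_ker (hφ : IsRelQuadraticMap K φ) :
    augmentationSubmodule G ^ 3 ≤ LinearMap.ker (linearExtension φ) := by
  rw [show augmentationSubmodule G ^ 3 = augmentationSubmodule G * augmentationSubmodule G *
      augmentationSubmodule G by rw [pow_succ, pow_two], augmentationSubmodule,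
    Submodule.span_mul_span, Submodule.span_mul_span, Submodule.span_le]
  rintro _ ⟨_, ⟨_, ⟨a, rfl⟩, _, ⟨b, rfl⟩, rfl⟩, _, ⟨c, rfl⟩, rfl⟩
  simp only [SetLike.mem_coe, LinearMap.mem_ker, of_sub_one_mul_of_sub_one_mul_of_sub_one,
    map_add, map_sub, linearExtension_of, linearExtension_one, hφ.map_one]
  calc _ = (φ (a * b * c) + φ a + φ b + φ c) - (φ (a * b) + φ (a * c) + φ (b * c)) := by abel
    _ = 0 := sub_eq_zero.2 (hφ.map_mul_mul a b c)

lemma eq_zero_of_mem_D3 (hφ : IsRelQuadraticMap K φ) {g : G} (hg : g ∈ D3 K) : φ g = 0 := by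
  have hker : relAugMulKG K + augmentationSubmodule G ^ 3 ≤ LinearMap.ker (linearExtension φ) :=
    sup_le hφ.relAugMulKG_le_ker hφ.augmentationSubmodule_pow_three_le_ker
  simpa only [LinearMap.mem_ker, map_sub, linearExtension_of, linearExtension_one, hφ.map_one,
    sub_zero] using hker hg

end IsRelQuadraticMap

lemma MonoidHom.isRelQuadraticMap {H : Type*} [CommGroup H] (f : G →* H) (K : Subgroup G) :
    IsRelQuadraticMap K (fun g ↦ Additive.ofMul (f g)) where
  map_mul_left k _ g := by simp only [map_mul, ofMul_mul]
  map_mul_mul a b c := by simp only [map_mul, ofMul_mul]; abel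

lemma D3_subset_commutator (K : Subgroup G) : D3 K ⊆ commutator G := fun g hg ↦ by
  rw [SetLike.mem_coe, ← Abelianization.ker_of, MonoidHom.mem_ker, ← ofMul_eq_zero]
  exact (Abelianization.of.isRelQuadraticMap K).eq_zero_of_mem_D3 hg

end RelQuadraticMap

lemma commutatorElement_mem_of_mem_right {K : Subgroup G} [K.Normal] (y : G) {u : G}
    (hu : u ∈ K) : ⁅y, u⁆ ∈ K :=
  Subgroup.commutator_le_right ⊤ K (Subgroup.commutator_mem_commutator (Subgroup.mem_top y) hu)

section RelCharacter

variable {M : Type*} [AddCommGroup M] {K : Subgroup G}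

structure IsRelCharacter (K : Subgroup G) (lam : G → M) : Prop where
  map_mul : ∀ a ∈ K, ∀ b ∈ K, lam (a * b) = lam a + lam b
  map_eq_zero : ∀ a ∈ ⁅K, K⁆ ⊔ (⊤ : Subgroup G).lowerCentralSeries 2, lam a = 0

namespace IsRelCharacter

variable {lam : G → M}

lemma map_one (hlam : IsRelCharacter K lam) : lam 1 = 0 :=
  hlam.map_eq_zero 1 (one_mem _)

lemma map_zpow (hlam : IsRelCharacter K lam) {w : G} (hw : w ∈ K) (z : ℤ) :
    lam (w ^ z) = z • lam w := by
  let f : K →* Multiplicative M :=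
    MonoidHom.mk' (fun k ↦ .ofAdd (lam k)) fun a b ↦ hlam.map_mul a a.2 b b.2
  exact congrArg Multiplicative.toAdd (_root_.map_zpow f ⟨w, hw⟩ z)

variable [K.Normal]

lemma map_conj (hlam : IsRelCharacter K lam) (y : G) {w : G} (hw : w ∈ K) :
    lam (y * w * y⁻¹) = lam ⁅y, w⁆ + lam w := by
  rw [← hlam.map_mul _ (commutatorElement_mem_of_mem_right y hw) _ hw, commutatorElement_def]
  group

lemma map_commutatorElement_mul (hlam : IsRelCharacter K lam) (y z : G) {u : G} (hu : u ∈ K) :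
    lam ⁅y * z, u⁆ = lam ⁅y, u⁆ + lam ⁅z, u⁆ := by
  have hzu := commutatorElement_mem_of_mem_right z hu
  have hγ₃ : ⁅y, ⁅z, u⁆⁆ ∈ (⊤ : Subgroup G).lowerCentralSeries 2 := by
    rw [Subgroup.lowerCentralSeries_succ, Subgroup.commutator_comm]
    exact Subgroup.commutator_mem_commutator (Subgroup.mem_top y)
      (Subgroup.commutator_mem_commutator (Subgroup.mem_top z) (Subgroup.mem_top u))
  calc lam ⁅y * z, u⁆ = lam (y * ⁅z, u⁆ * y⁻¹ * ⁅y, u⁆) := by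
        simp only [commutatorElement_def]; group
    _ = lam ⁅y, u⁆ + lam ⁅z, u⁆ := by
      rw [hlam.map_mul _ (Subgroup.Normal.conj_mem inferInstance _ hzu y) _
          (commutatorElement_mem_of_mem_right y hu), hlam.map_conj y hzu,
        hlam.map_eq_zero _ (Subgroup.mem_sup_right hγ₃), zero_add, add_comm]

lemma map_commutatorElement_congr (hlam : IsRelCharacter K lam) {y z : G}
    (h : (y : G ⧸ K) = z) {u : G} (hu : u ∈ K) : lam ⁅z, u⁆ = lam ⁅y, u⁆ := by
  have hyz : y⁻¹ * z ∈ K := QuotientGroup.eq.1 h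
  rw [show z = y * (y⁻¹ * z) by group, hlam.map_commutatorElement_mul _ _ hu,
    hlam.map_eq_zero _ (Subgroup.mem_sup_left (Subgroup.commutator_mem_commutator hyz hu)),
    add_zero]

end IsRelCharacter

end RelCharacter

section CyclicExtension

variable {M : Type*} [AddCommGroup M] {K : Subgroup G} [K.Normal]

/-- Writing `g = k * x ^ i` with `k ∈ K` and `i = e ḡ`, this is `lam k + i • ξ`: `ξ` stands in
for the value of `lam` at `x`, which need not lie in `K`. -/
def cyclicExtension (x : G) (e : G ⧸ K → ℤ) (lam : G → M) (ξ : M) (g : G) : M :=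
  lam (g * x ^ (-e g)) + e g • ξ

variable {x : G} {e : G ⧸ K → ℤ} {lam : G → M} {ξ : M}

lemma mul_zpow_neg_mem (hx : ∀ c, (x : G ⧸ K) ^ e c = c) (g : G) : g * x ^ (-e g) ∈ K := by
  rw [← QuotientGroup.eq_one_iff, QuotientGroup.mk_mul, QuotientGroup.mk_zpow, zpow_neg, hx,
    mul_inv_cancel]

lemma cyclicExtension_of_mem (he : e 1 = 0) {k : G} (hk : k ∈ K) :
    cyclicExtension x e lam ξ k = lam k := by
  simp [cyclicExtension, (QuotientGroup.eq_one_iff k).2 hk, he]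

lemma cyclicExtension_mul (hlam : IsRelCharacter K lam) (hx : ∀ c, (x : G ⧸ K) ^ e c = c)
    (hξ : ∀ z : ℤ, (x : G ⧸ K) ^ z = 1 → lam (x ^ z) = z • ξ) (g h : G) :
    cyclicExtension x e lam ξ (g * h) = cyclicExtension x e lam ξ g + cyclicExtension x e lam ξ h
      + lam ⁅x ^ e g, h * x ^ (-e h)⁆ := by
  set i := e g
  set j := e h
  set l := e (g * h : G)
  have hd : (x : G ⧸ K) ^ (i + j - l) = 1 := by
    rw [zpow_sub, zpow_add, hx, hx, hx, QuotientGroup.mk_mul, mul_inv_cancel]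
  have hdK : x ^ (i + j - l) ∈ K := by rwa [← QuotientGroup.eq_one_iff, QuotientGroup.mk_zpow]
  have hconj : x ^ i * (h * x ^ (-j)) * (x ^ i)⁻¹ ∈ K :=
    Subgroup.Normal.conj_mem inferInstance _ (mul_zpow_neg_mem hx h) _
  have hfactor : g * h * x ^ (-l) =
      g * x ^ (-i) * (x ^ i * (h * x ^ (-j)) * (x ^ i)⁻¹ * x ^ (i + j - l)) := by
    group
  simp only [cyclicExtension]
  rw [hfactor, hlam.map_mul _ (mul_zpow_neg_mem hx g) _ (mul_mem hconj hdK),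
    hlam.map_mul _ hconj _ hdK, hlam.map_conj _ (mul_zpow_neg_mem hx h), hξ _ hd, sub_smul,
    add_smul]
  abel

lemma isRelQuadraticMap_cyclicExtension (hlam : IsRelCharacter K lam)
    (hx : ∀ c, (x : G ⧸ K) ^ e c = c) (he : e 1 = 0)
    (hξ : ∀ z : ℤ, (x : G ⧸ K) ^ z = 1 → lam (x ^ z) = z • ξ) :
    IsRelQuadraticMap K (cyclicExtension x e lam ξ) where
  map_mul_left k hk g := by
    rw [cyclicExtension_mul hlam hx hξ, (QuotientGroup.eq_one_iff k).2 hk, he, zpow_zero,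
      commutatorElement_one_left, hlam.map_one, add_zero]
  map_mul_mul a b c := by
    have hΔ : lam ⁅x ^ e (a * b : G), c * x ^ (-e c)⁆ =
        lam ⁅x ^ e a, c * x ^ (-e c)⁆ + lam ⁅x ^ e b, c * x ^ (-e c)⁆ := by
      rw [← hlam.map_commutatorElement_mul _ _ (mul_zpow_neg_mem hx c)]
      refine hlam.map_commutatorElement_congr ?_ (mul_zpow_neg_mem hx c)
      rw [QuotientGroup.mk_mul, QuotientGroup.mk_zpow, QuotientGroup.mk_zpow,
        QuotientGroup.mk_zpow, hx, hx, hx, QuotientGroup.mk_mul]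
    simp only [cyclicExtension_mul hlam hx hξ, hΔ]
    abel

end CyclicExtension

lemma exists_zpow_index {Q : Type*} [Group Q] {q : Q} (hq : ∀ c, c ∈ Subgroup.zpowers q) :
    ∃ e : Q → ℤ, (∀ c, q ^ e c = c) ∧ e 1 = 0 := by
  classical
  choose e he using fun c ↦ Subgroup.mem_zpowers_iff.1 (hq c)
  refine ⟨fun c ↦ if c = 1 then 0 else e c, fun c ↦ ?_, by simp⟩
  dsimp only
  split_ifs with h <;> simp [h, he]

section CyclicQuotient

variable {M : Type*} [AddCommGroup M] {K : Subgroup G} [K.Normal] {lam : G → M}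

lemma IsRelCharacter.exists_zsmul_eq [DivisibleBy M ℤ] (hlam : IsRelCharacter K lam) (x : G) :
    ∃ ξ : M, ∀ z : ℤ, (x : G ⧸ K) ^ z = 1 → lam (x ^ z) = z • ξ := by
  set n := orderOf (x : G ⧸ K)
  have hxn : x ^ (n : ℤ) ∈ K := by
    rw [← QuotientGroup.eq_one_iff, QuotientGroup.mk_zpow, zpow_natCast, pow_orderOf_eq_one]
  refine ⟨DivisibleBy.div (lam (x ^ (n : ℤ))) (n : ℤ), fun z hz ↦ ?_⟩
  obtain ⟨m, rfl⟩ := orderOf_dvd_iff_zpow_eq_one.2 hz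
  rw [zpow_mul, hlam.map_zpow hxn, mul_comm, mul_smul]
  rcases eq_or_ne n 0 with h0 | h0
  · simp [n, h0, hlam.map_one]
  · rw [DivisibleBy.div_cancel _ (by exact_mod_cast h0)]

lemma IsRelCharacter.eq_zero_of_mem_D3 [DivisibleBy M ℤ] [IsCyclic (G ⧸ K)]
    (hlam : IsRelCharacter K lam) {g : G} (hgK : g ∈ K) (hg : g ∈ D3 K) : lam g = 0 := by
  obtain ⟨t, hgen⟩ := IsCyclic.exists_generator (α := G ⧸ K)
  obtain ⟨x, rfl⟩ := QuotientGroup.mk_surjective t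
  obtain ⟨e, hx, he⟩ := exists_zpow_index hgen
  obtain ⟨ξ, hξ⟩ := hlam.exists_zsmul_eq x
  rw [← cyclicExtension_of_mem (x := x) (lam := lam) (ξ := ξ) he hgK]
  exact (isRelQuadraticMap_cyclicExtension hlam hx he hξ).eq_zero_of_mem_D3 hg

variable [IsCyclic (G ⧸ K)]

open scoped IsMulCommutative in
lemma mem_commutator_sup_lowerCentralSeries_two_of_mem_D3 {g : G} (hg : g ∈ D3 K) :
    g ∈ ⁅K, K⁆ ⊔ (⊤ : Subgroup G).lowerCentralSeries 2 := by
  set N := ⁅K, K⁆ ⊔ (⊤ : Subgroup G).lowerCentralSeries 2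
  have hG₂K : commutator G ≤ K :=
    Subgroup.Normal.quotient_commutative_iff_commutator_le.1 inferInstance
  have hgK : g ∈ K := hG₂K (D3_subset_commutator K hg)
  have hNK : N ≤ K := sup_le (Subgroup.commutator_le_left K K)
    ((Subgroup.lowerCentralSeries_antitone _ (by norm_num : 1 ≤ 2)).trans hG₂K)
  have : IsMulCommutative (K ⧸ N.subgroupOf K) := by
    refine Subgroup.Normal.quotient_commutative_iff_commutator_le.2 ?_
    rw [commutator_def, Subgroup.commutator_le]
    intro a _ b _
    exact Subgroup.mem_sup_left (Subgroup.commutator_mem_commutator a.2 b.2)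
  suffices h : ∀ χ : CharacterModule (Additive (K ⧸ N.subgroupOf K)),
      χ (.ofMul (⟨g, hgK⟩ : K)) = 0 by
    simpa [QuotientGroup.eq_one_iff, Subgroup.mem_subgroupOf] using
      CharacterModule.eq_zero_of_character_apply h
  intro χ
  classical
  let lam : G → AddCircle (1 : ℚ) := fun a ↦ if ha : a ∈ K then χ (.ofMul (⟨a, ha⟩ : K)) else 0
  have hlam : IsRelCharacter K lam := by
    refine ⟨fun a ha b hb ↦ ?_, fun a ha ↦ ?_⟩
    · simp only [lam, dif_pos ha, dif_pos hb, dif_pos (mul_mem ha hb)]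
      exact_mod_cast map_add χ (.ofMul (⟨a, ha⟩ : K)) (.ofMul (⟨b, hb⟩ : K))
    · have hmk : ((⟨a, hNK ha⟩ : K) : K ⧸ N.subgroupOf K) = 1 :=
        (QuotientGroup.eq_one_iff _).2 (Subgroup.mem_subgroupOf.2 ha)
      simp only [lam, dif_pos (hNK ha), hmk, ofMul_one, map_zero]
  simpa [lam, hgK] using hlam.eq_zero_of_mem_D3 hgK hg

end CyclicQuotient

end

/-- **Corollary 2.3(3)**: if `K` is normal and `G/K` is cyclic, then
`[K,K]·G₃ = D₃(G,K)`. -/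
theorem relative_dim3_eq_of_cyclic_quotient {G : Type*} [Group G] (K : Subgroup G)
    [K.Normal] (h : IsCyclic (G ⧸ K)) :
    D3 K = ↑(⁅K, K⁆ ⊔ (⊤ : Subgroup G).lowerCentralSeries 2) := by
  have := h
  exact Set.Subset.antisymm (fun _ ↦ mem_commutator_sup_lowerCentralSeries_two_of_mem_D3)
    (commutator_sup_lowerCentralSeries_two_subset_D3 K)
end

section
/- Let A be an abelian group and B ≤ A a subgroup with inclusion j: B → A and quotient map q: A → A/B. Let A∧A = (A⊗A)/⟨a⊗a : a ∈ A⟩ with a∧a' the class of a⊗a', let ν: A⊗B → A∧A be defined by ν(a⊗b) = a∧j(b), and let ℓ: A∧A → A⊗A be defined by ℓ(a∧a') = a⊗a' − a'⊗a. Then the kernel of the composite (q⊗id_A)∘ℓ: A∧A → (A/B)⊗A equals ν((q⊗id_B)^{-1}(Ker(id_{A/B}⊗j: (A/B)⊗B → (A/B)⊗A))), where q⊗id_B: A⊗B → (A/B)⊗B. (Equivalently, since Ker(id⊗j) = Im(τ) for the connecting homomorphism τ: Tor₁^ℤ(A/B, A/B) → (A/B)⊗B, this kernel is ν(q⊗id)^{-1}Im(τ).)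 -/
/-!
The map `ℓ` is injective: every symmetric tensor of `C ⊗ C` lies in the span of the squares
`c ⊗ c`. For cyclic `C` every tensor is a multiple of `g ⊗ g`. For a finite product of cyclic
groups, split `u = ∑ᵢⱼ (eᵢ ⊗ eⱼ) u` along the coordinate idempotents; when `u` is symmetric the
off-diagonal terms pair up as `y + τ y = (y₁ + y₂) ⊗ (y₁ + y₂) - y₁ ⊗ y₁ - y₂ ⊗ y₂` for pure `y`.
The structure theorem covers finitely generated groups, and the general case follows because a
relation in `C ⊗ C` already holds in `K ⊗ K` for some finitely generated `K ≤ C`.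

For the lemma, write `F = q ⊗ 1`, `G = 1 ⊗ q`, so that `F ∘ τ = τ ∘ G`. If `F (t - τ t) = 0`,
then `(q ⊗ q) t` is symmetric, hence equals `(q ⊗ q) d` for a sum of squares `d`. By right
exactness `t - d = a + b` with `F a = 0 = G b`, and `t' = a - τ b` is congruent to `t` modulo
squares and killed by both `F` and `G`. The tensors killed by `F` and `G` are exactly the
`(1 ⊗ j) x` with `(1 ⊗ j) (q ⊗ 1) x = 0`.
-/

open TensorProduct

/-- The exterior square `A ∧ A` of an abelian group: the quotient of `A ⊗ A` by the
subgroup generated by the elements `a ⊗ a`. -/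
abbrev wedgeSquare (A : Type*) [AddCommGroup A] :=
  (A ⊗[ℤ] A) ⧸ Submodule.span ℤ {x : A ⊗[ℤ] A | ∃ a : A, x = a ⊗ₜ[ℤ] a}

def squareSpan (M : Type*) [AddCommGroup M] : Submodule ℤ (M ⊗[ℤ] M) :=
  Submodule.span ℤ {x | ∃ m : M, x = m ⊗ₜ[ℤ] m}

def SymmetricTensorsAreSquares (M : Type*) [AddCommGroup M] : Prop :=
  ∀ u : M ⊗[ℤ] M, TensorProduct.comm ℤ M M u = u → u ∈ squareSpan M

section squareSpan

variable {M N : Type*} [AddCommGroup M] [AddCommGroup N]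

theorem tmul_self_mem_squareSpan (m : M) : m ⊗ₜ[ℤ] m ∈ squareSpan M :=
  Submodule.subset_span ⟨m, rfl⟩

theorem map_mem_squareSpan (f : M →ₗ[ℤ] N) {x : M ⊗[ℤ] M} (hx : x ∈ squareSpan M) :
    map f f x ∈ squareSpan N := by
  induction hx using Submodule.span_induction with
  | mem _ h => obtain ⟨m, rfl⟩ := h; exact tmul_self_mem_squareSpan (f m)
  | zero => simp
  | add x y _ _ hx hy => rw [map_add]; exact add_mem hx hy
  | smul n x _ hx => rw [map_zsmul]; exact Submodule.smul_mem _ n hx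

theorem exists_mem_squareSpan_map_eq {f : M →ₗ[ℤ] N} (hf : Function.Surjective f)
    {y : N ⊗[ℤ] N} (hy : y ∈ squareSpan N) : ∃ x ∈ squareSpan M, map f f x = y := by
  induction hy using Submodule.span_induction with
  | mem _ h =>
    obtain ⟨n, rfl⟩ := h
    obtain ⟨m, rfl⟩ := hf n
    exact ⟨m ⊗ₜ m, tmul_self_mem_squareSpan m, rfl⟩
  | zero => exact ⟨0, zero_mem _, map_zero _⟩
  | add _ _ _ _ hx hy =>
    obtain ⟨x, hx, rfl⟩ := hx
    obtain ⟨y, hy, rfl⟩ := hy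
    exact ⟨x + y, add_mem hx hy, map_add _ x y⟩
  | smul n _ _ hx =>
    obtain ⟨x, hx, rfl⟩ := hx
    exact ⟨n • x, Submodule.smul_mem _ n hx, map_zsmul _ n x⟩

theorem add_comm_mem_squareSpan (x : M ⊗[ℤ] M) :
    x + TensorProduct.comm ℤ M M x ∈ squareSpan M := by
  induction x with
  | zero => simp
  | tmul m n =>
    have h : m ⊗ₜ[ℤ] n + n ⊗ₜ[ℤ] m = (m + n) ⊗ₜ (m + n) - m ⊗ₜ m - n ⊗ₜ n := by
      simp only [tmul_add, add_tmul]; abel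
    rw [comm_tmul, h]
    exact sub_mem (sub_mem (tmul_self_mem_squareSpan _) (tmul_self_mem_squareSpan _))
      (tmul_self_mem_squareSpan _)
  | add x y hx hy =>
    rw [map_add, add_add_add_comm]
    exact add_mem hx hy

theorem comm_eq_of_mem_squareSpan {x : M ⊗[ℤ] M} (hx : x ∈ squareSpan M) :
    TensorProduct.comm ℤ M M x = x := by
  induction hx using Submodule.span_induction with
  | mem _ h => obtain ⟨m, rfl⟩ := h; rfl
  | zero => simp
  | add x y _ _ hx hy => rw [map_add, hx, hy]
  | smul n x _ hx => rw [map_zsmul, hx]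

theorem mem_squareSpan_of_isAddCyclic [IsAddCyclic M] (x : M ⊗[ℤ] M) : x ∈ squareSpan M := by
  obtain ⟨g, hg⟩ := IsAddCyclic.exists_generator (α := M)
  induction x with
  | zero => exact zero_mem _
  | tmul m n =>
    obtain ⟨a, rfl⟩ := hg m
    obtain ⟨b, rfl⟩ := hg n
    rw [smul_tmul_smul]
    exact Submodule.smul_mem _ _ (tmul_self_mem_squareSpan g)
  | add x y hx hy => exact add_mem hx hy

theorem SymmetricTensorsAreSquares.of_addEquiv (e : M ≃+ N)
    (hM : SymmetricTensorsAreSquares M) : SymmetricTensorsAreSquares N := by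
  intro u hu
  let E := TensorProduct.congr e.toIntLinearEquiv e.toIntLinearEquiv
  have hsymm : TensorProduct.comm ℤ M M (E.symm u) = E.symm u := by
    conv_rhs => rw [← hu]
    exact (map_comm _ _ u).symm
  rw [← E.apply_symm_apply u]
  exact map_mem_squareSpan e.toIntLinearEquiv.toLinearMap (hM _ hsymm)

theorem sum_sum_mem_squareSpan {ι : Type*} (s : Finset ι) (x : ι → ι → M ⊗[ℤ] M)
    (hdiag : ∀ i ∈ s, x i i ∈ squareSpan M)
    (hswap : ∀ i ∈ s, ∀ j ∈ s, x j i = TensorProduct.comm ℤ M M (x i j)) :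
    ∑ i ∈ s, ∑ j ∈ s, x i j ∈ squareSpan M := by
  classical
  induction s using Finset.induction_on with
  | empty => simp
  | insert a s ha ih =>
    have hsplit : ∑ i ∈ insert a s, ∑ j ∈ insert a s, x i j = x a a +
        ∑ j ∈ s, (x a j + TensorProduct.comm ℤ M M (x a j)) + ∑ i ∈ s, ∑ j ∈ s, x i j := by
      simp only [Finset.sum_insert ha, Finset.sum_add_distrib]
      rw [Finset.sum_congr rfl fun j hj => hswap a (Finset.mem_insert_self a s) j
        (Finset.mem_insert_of_mem hj)]
      abel
    rw [hsplit]
    refine add_mem (add_mem (hdiag a (Finset.mem_insert_self a s))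
      (sum_mem fun j _ => add_comm_mem_squareSpan _)) (ih ?_ ?_)
    · exact fun i hi => hdiag i (Finset.mem_insert_of_mem hi)
    · exact fun i hi j hj => hswap i (Finset.mem_insert_of_mem hi) j (Finset.mem_insert_of_mem hj)

end squareSpan

theorem symmetricTensorsAreSquares_pi {ι : Type*} [Fintype ι] {M : ι → Type*}
    [∀ i, AddCommGroup (M i)] [∀ i, IsAddCyclic (M i)] :
    SymmetricTensorsAreSquares (∀ i, M i) := by
  classical
  intro u hu
  let e : ι → Module.End ℤ (∀ i, M i) := fun i => LinearMap.single ℤ M i ∘ₗ LinearMap.proj i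
  have he : ∑ i, e i = LinearMap.id := LinearMap.ext fun x => by
    simp [e, Finset.univ_sum_single]
  have hdecomp : u = ∑ i, ∑ j, map (e i) (e j) u := by
    calc u = map (∑ i, e i) (∑ j, e j) u := by rw [he, map_id]; rfl
      _ = _ := by
        simp only [← mapBilinear_apply, map_sum, LinearMap.sum_apply]
        exact Finset.sum_comm
  rw [hdecomp]
  refine sum_sum_mem_squareSpan _ _ (fun i _ => ?_) (fun i _ j _ => ?_)
  · rw [map_comp]
    exact map_mem_squareSpan _ (mem_squareSpan_of_isAddCyclic _)
  · conv_lhs => rw [← hu]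
    exact map_comm _ _ u

theorem symmetricTensorsAreSquares_of_fg (M : Type*) [AddCommGroup M] [AddGroup.FG M] :
    SymmetricTensorsAreSquares M := by
  obtain ⟨n, ι, _, p, -, e, ⟨f⟩⟩ := AddCommGroup.equiv_free_prod_directSum_zmod M
  -- `ZMod 0` is `ℤ`, so the free part is a product of cyclic groups `ZMod (c k)` as well.
  let c : Fin n ⊕ ι → ℕ := Sum.elim (fun _ => 0) (fun i => p i ^ e i)
  let g : M ≃+ ∀ k, ZMod (c k) :=
    (f.trans ((Finsupp.linearEquivFunOnFinite ℤ ℤ (Fin n)).toAddEquiv.prodCongr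
      (DirectSum.linearEquivFunOnFintype ℤ ι _).toAddEquiv)).trans
      (LinearEquiv.sumPiEquivProdPi ℤ (Fin n) ι fun k => ZMod (c k)).toAddEquiv.symm
  exact symmetricTensorsAreSquares_pi.of_addEquiv g.symm

namespace TensorProduct

variable {R M N : Type*} [CommRing R] [AddCommGroup M] [Module R M] [AddCommGroup N] [Module R N]

theorem exists_fg_mem_range_map_subtype (u : M ⊗[R] M) :
    ∃ P : Submodule R M, P.FG ∧ u ∈ LinearMap.range (map P.subtype P.subtype) := by
  obtain ⟨M₁, M₂, h₁, h₂, hu⟩ := exists_finite_submodule_of_setFinite {u} (Set.finite_singleton u)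
  rw [Module.Finite.iff_fg] at h₁ h₂
  exact ⟨M₁ ⊔ M₂, h₁.sup h₂, range_mapIncl_mono le_sup_left le_sup_right (hu rfl)⟩

theorem exists_fg_lTensor_inclusion_eq_zero {P : Submodule R M} (hP : P.FG) {t : N ⊗[R] P}
    (ht : P.subtype.lTensor N t = 0) :
    ∃ (Q : Submodule R M) (hPQ : P ≤ Q), Q.FG ∧ (Submodule.inclusion hPQ).lTensor N t = 0 := by
  have ht' : P.subtype.rTensor N (TensorProduct.comm R N P t) = 0 := by
    rw [LinearMap.rTensor_comm, ht, map_zero]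
  obtain ⟨Q, hPQ, hQ, hQt⟩ := eq_zero_of_fg_of_subtype_eq_zero hP ht'
  rw [LinearMap.rTensor_comm, LinearEquiv.map_eq_zero_iff] at hQt
  exact ⟨Q, hPQ, hQ, hQt⟩

theorem exists_fg_map_inclusion_eq_zero {P : Submodule R M} (hP : P.FG) {w : P ⊗[R] P}
    (hw : map P.subtype P.subtype w = 0) :
    ∃ (Q : Submodule R M) (hPQ : P ≤ Q), Q.FG ∧
      map (Submodule.inclusion hPQ) (Submodule.inclusion hPQ) w = 0 := by
  rw [← LinearMap.rTensor_comp_lTensor, LinearMap.comp_apply] at hw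
  obtain ⟨Q₁, h₁, hQ₁, hw₁⟩ := eq_zero_of_fg_of_subtype_eq_zero hP hw
  rw [← LinearMap.comp_apply, LinearMap.rTensor_comp_lTensor, ← LinearMap.lTensor_comp_rTensor,
    LinearMap.comp_apply] at hw₁
  obtain ⟨Q₂, h₂, hQ₂, hw₂⟩ := exists_fg_lTensor_inclusion_eq_zero hP hw₁
  rw [← LinearMap.comp_apply, LinearMap.lTensor_comp_rTensor] at hw₂
  refine ⟨Q₁ ⊔ Q₂, h₁.trans le_sup_left, hQ₁.sup hQ₂, ?_⟩
  have hsplit : map (Submodule.inclusion (h₁.trans le_sup_left))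
      (Submodule.inclusion (h₁.trans le_sup_left)) w =
      map (Submodule.inclusion (le_sup_left : Q₁ ≤ Q₁ ⊔ Q₂))
        (Submodule.inclusion (le_sup_right : Q₂ ≤ Q₁ ⊔ Q₂))
        (map (Submodule.inclusion h₁) (Submodule.inclusion h₂) w) := by
    rw [← LinearMap.comp_apply, ← map_comp]; rfl
  rw [hsplit, hw₂, map_zero]

end TensorProduct

theorem symmetricTensorsAreSquares (M : Type*) [AddCommGroup M] :
    SymmetricTensorsAreSquares M := by
  intro u hu
  obtain ⟨P, hP, v, rfl⟩ := TensorProduct.exists_fg_mem_range_map_subtype (R := ℤ) u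
  have hw : map P.subtype P.subtype (v - TensorProduct.comm ℤ P P v) = 0 := by
    rw [map_sub, map_comm, hu, sub_self]
  obtain ⟨Q, hPQ, hQ, hQw⟩ := TensorProduct.exists_fg_map_inclusion_eq_zero hP hw
  have : AddGroup.FG Q := Module.Finite.iff_addGroup_fg.mp (Module.Finite.iff_fg.mpr hQ)
  set v' := map (Submodule.inclusion hPQ) (Submodule.inclusion hPQ) v
  have hv' : TensorProduct.comm ℤ Q Q v' = v' := by
    rw [map_sub, map_comm, sub_eq_zero] at hQw
    exact hQw.symm
  have hvv' : map P.subtype P.subtype v = map Q.subtype Q.subtype v' := by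
    rw [← LinearMap.comp_apply, ← map_comp]; rfl
  rw [hvv']
  exact map_mem_squareSpan _ (symmetricTensorsAreSquares_of_fg Q v' hv')

section ShortExact

variable {B A C : Type*} [AddCommGroup B] [AddCommGroup A] [AddCommGroup C]
  {j : B →ₗ[ℤ] A} {q : A →ₗ[ℤ] C}

theorem exists_sub_mem_squareSpan_of_rTensor_sub_comm_eq_zero (hjq : Function.Exact j q)
    (hq : Function.Surjective q) {t : A ⊗[ℤ] A}
    (ht : q.rTensor A (t - TensorProduct.comm ℤ A A t) = 0) :
    ∃ t', q.rTensor A t' = 0 ∧ q.lTensor A t' = 0 ∧ t - t' ∈ squareSpan A := by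
  have hsymm : TensorProduct.comm ℤ C C (map q q t) = map q q t := by
    rw [map_sub, sub_eq_zero] at ht
    rw [← map_comm, ← LinearMap.lTensor_comp_rTensor, LinearMap.comp_apply, LinearMap.comp_apply,
      ← ht]
  obtain ⟨d, hd, hdt⟩ := exists_mem_squareSpan_map_eq hq (symmetricTensorsAreSquares C _ hsymm)
  have hker : t - d ∈ LinearMap.ker (map q q) := by
    rw [LinearMap.mem_ker, map_sub, hdt, sub_self]
  rw [TensorProduct.map_ker hjq hq hjq hq, Submodule.mem_sup] at hker
  obtain ⟨_, ⟨b', rfl⟩, _, ⟨a', rfl⟩, hab⟩ := hker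
  have hb : q.lTensor A (j.lTensor A b') = 0 := (lTensor_exact A hjq hq).apply_apply_eq_zero b'
  have ha : q.rTensor A (j.rTensor A a') = 0 := (rTensor_exact A hjq hq).apply_apply_eq_zero a'
  set b := j.lTensor A b'
  set a := j.rTensor A a'
  have hba : q.rTensor A b = TensorProduct.comm ℤ A C (q.lTensor A a) := by
    rw [← sub_add_cancel t d, ← hab, map_add, comm_eq_of_mem_squareSpan hd,
      add_sub_add_right_eq_sub] at ht
    simpa only [map_add, map_sub, LinearMap.rTensor_comm, ha, hb, map_zero, add_zero, zero_add,
      sub_eq_zero] using ht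
  refine ⟨a - TensorProduct.comm ℤ A A b, ?_, ?_, ?_⟩
  · rw [map_sub, ha, LinearMap.rTensor_comm, hb, map_zero, sub_zero]
  · rw [map_sub, LinearMap.lTensor_comm, hba, TensorProduct.comm_comm, sub_self]
  · rw [← sub_add_cancel t d, ← hab, show b + a + d - (a - TensorProduct.comm ℤ A A b) =
      d + (b + TensorProduct.comm ℤ A A b) by abel]
    exact add_mem hd (add_comm_mem_squareSpan b)

theorem rTensor_eq_zero_and_lTensor_eq_zero_iff (hjq : Function.Exact j q)
    (hq : Function.Surjective q) {t : A ⊗[ℤ] A} :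
    q.rTensor A t = 0 ∧ q.lTensor A t = 0 ↔
      ∃ x : A ⊗[ℤ] B, j.lTensor C (q.rTensor B x) = 0 ∧ j.lTensor A x = t := by
  constructor
  · rintro ⟨hF, hG⟩
    obtain ⟨x, rfl⟩ := (lTensor_exact A hjq hq t).mp hG
    refine ⟨x, ?_, rfl⟩
    rwa [← LinearMap.comp_apply, LinearMap.lTensor_comp_rTensor, ← LinearMap.rTensor_comp_lTensor]
  · rintro ⟨x, hx, rfl⟩
    refine ⟨?_, (lTensor_exact A hjq hq).apply_apply_eq_zero x⟩
    rwa [← LinearMap.comp_apply, LinearMap.rTensor_comp_lTensor, ← LinearMap.lTensor_comp_rTensor]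

end ShortExact

namespace wedgeSquare

variable {A B : Type*} [AddCommGroup A] [AddCommGroup B]

theorem apply_mk_eq_sub_comm (ℓ : wedgeSquare A →ₗ[ℤ] A ⊗[ℤ] A)
    (hℓ : ∀ a a' : A, ℓ (Submodule.Quotient.mk (a ⊗ₜ[ℤ] a')) = a ⊗ₜ[ℤ] a' - a' ⊗ₜ[ℤ] a)
    (t : A ⊗[ℤ] A) : ℓ (Submodule.Quotient.mk t) = t - TensorProduct.comm ℤ A A t := by
  induction t with
  | zero => simp
  | tmul a a' => rw [hℓ, comm_tmul]
  | add s t hs ht => rw [Submodule.Quotient.mk_add, map_add, hs, ht, map_add]; abel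

theorem apply_eq_mk_lTensor {j : B →ₗ[ℤ] A} (ν : A ⊗[ℤ] B →ₗ[ℤ] wedgeSquare A)
    (hν : ∀ (a : A) (b : B), ν (a ⊗ₜ[ℤ] b) = Submodule.Quotient.mk (a ⊗ₜ[ℤ] j b))
    (x : A ⊗[ℤ] B) : ν x = Submodule.Quotient.mk (j.lTensor A x) := by
  induction x with
  | zero => simp
  | tmul a b => exact hν a b
  | add x y hx hy => rw [map_add, hx, hy, map_add, Submodule.Quotient.mk_add]

end wedgeSquare

theorem AddSubgroup.exact_subtype_mk' {A : Type*} [AddCommGroup A] (B : AddSubgroup A) :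
    Function.Exact B.subtype.toIntLinearMap (QuotientAddGroup.mk' B).toIntLinearMap := by
  intro a
  simp [QuotientAddGroup.eq_zero_iff]

/-- **Lemma 2.7**: let `B ≤ A` be abelian groups, `q : A → A/B` the quotient map,
`j : B → A` the inclusion, `ν : A ⊗ B → A ∧ A`, `a ⊗ b ↦ a ∧ b`, and
`ℓ : A ∧ A → A ⊗ A`, `a ∧ a' ↦ a ⊗ a' - a' ⊗ a`.  Then
`Ker((q ⊗ id_A) ∘ ℓ) = ν((q ⊗ id_B)⁻¹(Ker(id_{A/B} ⊗ j)))`. -/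
theorem wedge_kernel_lemma {A : Type*} [AddCommGroup A] (B : AddSubgroup A)
    (ν : (A ⊗[ℤ] B) →ₗ[ℤ] wedgeSquare A)
    (hν : ∀ (a : A) (b : B), ν (a ⊗ₜ[ℤ] b) = Submodule.Quotient.mk (a ⊗ₜ[ℤ] (b : A)))
    (ℓ : wedgeSquare A →ₗ[ℤ] A ⊗[ℤ] A)
    (hℓ : ∀ a a' : A,
      ℓ (Submodule.Quotient.mk (a ⊗ₜ[ℤ] a')) = a ⊗ₜ[ℤ] a' - a' ⊗ₜ[ℤ] a) :
    LinearMap.ker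
        ((TensorProduct.map (QuotientAddGroup.mk' B).toIntLinearMap
          (LinearMap.id : A →ₗ[ℤ] A)).comp ℓ) =
      Submodule.map ν
        (Submodule.comap
          (TensorProduct.map (QuotientAddGroup.mk' B).toIntLinearMap
            (LinearMap.id : (B : Type _) →ₗ[ℤ] B))
          (LinearMap.ker
            (TensorProduct.map (LinearMap.id : (A ⧸ B) →ₗ[ℤ] A ⧸ B)
              B.subtype.toIntLinearMap))) := by
  set q := (QuotientAddGroup.mk' B).toIntLinearMap
  have hjq := B.exact_subtype_mk'
  have hq : Function.Surjective q := QuotientAddGroup.mk'_surjective B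
  have hν' := wedgeSquare.apply_eq_mk_lTensor (j := B.subtype.toIntLinearMap) ν hν
  have hℓ' := wedgeSquare.apply_mk_eq_sub_comm ℓ hℓ
  ext w
  constructor
  · intro hw
    obtain ⟨t, rfl⟩ := Submodule.Quotient.mk_surjective _ w
    change q.rTensor A (ℓ (Submodule.Quotient.mk t)) = 0 at hw
    rw [hℓ'] at hw
    obtain ⟨t', hF, hG, htt'⟩ := exists_sub_mem_squareSpan_of_rTensor_sub_comm_eq_zero hjq hq hw
    obtain ⟨x, hx, rfl⟩ := (rTensor_eq_zero_and_lTensor_eq_zero_iff hjq hq).mp ⟨hF, hG⟩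
    refine ⟨x, hx, ?_⟩
    rw [hν', Submodule.Quotient.eq, ← neg_sub]
    exact neg_mem htt'
  · rintro ⟨x, hx, rfl⟩
    obtain ⟨hF, hG⟩ := (rTensor_eq_zero_and_lTensor_eq_zero_iff hjq hq).mpr ⟨x, hx, rfl⟩
    change q.rTensor A (ℓ (ν x)) = 0
    rw [hν', hℓ', map_sub, hF, LinearMap.rTensor_comm, hG, map_zero, sub_zero]
end

section
/- Let A be an abelian group (written additively), m ≥ 0 an integer, A_(m) = {a ∈ A : m·a = 0}, and SP²(A) = (A⊗A)/⟨a⊗b − b⊗a : a,b ∈ A⟩ with a⊗̂b the class of a⊗b. Then the map τ₃: A_(m) → SP²(A)/m·SP²(A), a ↦ class of C(m,2)·(a⊗̂a) where C(m,2) = m(m−1)/2, is a group homomorphism, and its kernel is: all of A_(m) if m is odd; and (A_(m) ∩ 2A) + A_(m/2) if m is even, where 2A = {2a : a ∈ A} and A_(m/2) = {a ∈ A : (m/2)·a = 0}. -/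
/-!
Since `2 C(m,2) = m(m-1)`, the cross terms of `τ₃(a + b)` vanish modulo `m`, so `τ₃` is additive
on all of `A`; for odd `m`, `m ∣ C(m,2)`, so `τ₃ = 0`. For `m = 2k` we have
`C(m,2) ≡ -k (mod m)`, hence `τ₃(a) = -(k a) ⊗̂ a`, which vanishes when `k a ∈ mA`. Conversely,
if `k a ∉ mA`, a `ℚ/ℤ`-valued character of `A/mA` that is nonzero at `k a` yields
`χ : A → ℤ/m` with `χ(k a) ≠ 0`, and the form `x ⊗̂ y ↦ χ(x) χ(y)` on `SP²(A)/m` takes the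
value `k χ(a)² = k χ(a) = χ(k a) ≠ 0` at `(k a) ⊗̂ a`. Finally, for `m a = 0`, `k a ∈ mA` exactly
when `a ∈ (A_(m) ∩ 2A) + A_(k)`.
-/

open TensorProduct

/-- The symmetric square `SP²(A)` of an abelian group: the quotient of `A ⊗ A` by the
subgroup generated by the elements `a ⊗ b - b ⊗ a`. -/
abbrev symSquare (A : Type*) [AddCommGroup A] :=
  (A ⊗[ℤ] A) ⧸ Submodule.span ℤ {x : A ⊗[ℤ] A | ∃ a b : A, x = a ⊗ₜ[ℤ] b - b ⊗ₜ[ℤ] a}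

/-- The quotient `SP²(A)/m·SP²(A)`. -/
abbrev symSquareModM (A : Type*) [AddCommGroup A] (m : ℕ) :=
  symSquare A ⧸ Submodule.span ℤ {x : symSquare A | ∃ y : symSquare A, x = m • y}

/-- The connecting homomorphism `τ₃ : A_(m) → SP²(A)/m·SP²(A)`,
`a ↦ class of C(m,2)·(a ⊗̂ a)` (given here by its explicit formula on all of `A`). -/
noncomputable def tauThree (A : Type*) [AddCommGroup A] (m : ℕ) (a : A) : symSquareModM A m :=
  Submodule.Quotient.mk (Submodule.Quotient.mk ((m.choose 2) • (a ⊗ₜ[ℤ] a)))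

theorem Nat.two_mul_choose_two (m : ℕ) : 2 * m.choose 2 = m * (m - 1) := by
  rw [Nat.choose_two_right, Nat.mul_div_cancel' (Nat.even_mul_pred_self m).two_dvd]

theorem Nat.choose_two_two_mul_add_one (j : ℕ) : (2 * j + 1).choose 2 = (2 * j + 1) * j := by
  have h := Nat.two_mul_choose_two (2 * j + 1)
  rw [Nat.add_sub_cancel] at h
  linarith

theorem Nat.choose_two_two_mul_add_self (k : ℕ) : (2 * k).choose 2 + k = 2 * k * k := by
  have h := Nat.two_mul_choose_two (2 * k)
  rcases k with _ | k
  · simp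
  · rw [show 2 * (k + 1) - 1 = 2 * k + 1 by omega] at h
    linarith

theorem ZMod.natCast_mul_mul_self_of_two_mul (k : ℕ) (t : ZMod (2 * k)) :
    (k : ZMod (2 * k)) * (t * t) = k * t := by
  obtain ⟨z, rfl⟩ := ZMod.intCast_surjective t
  obtain ⟨r, hr⟩ := Int.even_mul_pred_self z
  have hm : 2 * (k : ZMod (2 * k)) = 0 := by exact_mod_cast ZMod.natCast_self (2 * k)
  have hr' : (z : ZMod (2 * k)) * (z - 1) = r + r := by exact_mod_cast congrArg Int.cast hr
  linear_combination (k : ZMod (2 * k)) * hr' + (r : ZMod (2 * k)) * hm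

noncomputable def ZMod.toRatCircle (n : ℕ) : ZMod n →+ AddCircle (1 : ℚ) :=
  ZMod.lift n ⟨CharacterModule.int.divByNat n, CharacterModule.int.divByNat_self n⟩

theorem ZMod.toRatCircle_intCast (n : ℕ) (z : ℤ) :
    ZMod.toRatCircle n z = ((z / n : ℚ) : AddCircle (1 : ℚ)) := by
  rw [ZMod.toRatCircle, ZMod.lift_coe]
  simp [div_eq_mul_inv]

theorem ZMod.toRatCircle_injective (n : ℕ) [NeZero n] :
    Function.Injective (ZMod.toRatCircle n) := by
  refine (ZMod.lift_injective n).mpr fun z hz => ?_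
  rw [← ZMod.lift_coe n _ z, ← ZMod.toRatCircle, ZMod.toRatCircle_intCast] at hz
  obtain ⟨l, hl⟩ := (AddCircle.coe_eq_zero_iff 1).mp hz
  have hn : (n : ℚ) ≠ 0 := Nat.cast_ne_zero.mpr (NeZero.ne n)
  rw [zsmul_one, eq_div_iff hn] at hl
  rw [ZMod.intCast_zmod_eq_zero_iff_dvd]
  exact ⟨l, by exact_mod_cast hl.symm.trans (mul_comm _ _)⟩

theorem ZMod.mem_range_toRatCircle {n : ℕ} [NeZero n] {u : AddCircle (1 : ℚ)} (hu : n • u = 0) :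
    u ∈ (ZMod.toRatCircle n).range := by
  obtain ⟨j, -, rfl⟩ := (AddCircle.nsmul_eq_zero_iff (Nat.pos_of_neZero n)).mp hu
  exact ⟨j, by simpa using ZMod.toRatCircle_intCast n j⟩

theorem exists_addMonoidHom_zmod_apply_ne_zero {A : Type*} [AddCommGroup A] {n : ℕ} [NeZero n]
    {x : A} (hx : ∀ y : A, x ≠ n • y) : ∃ χ : A →+ ZMod n, χ x ≠ 0 := by
  set N := (DistribSMul.toAddMonoidHom A n).range
  have hxN : (x : A ⧸ N) ≠ 0 := by
    rw [Ne, QuotientAddGroup.eq_zero_iff]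
    rintro ⟨y, hy⟩
    exact hx y hy.symm
  obtain ⟨c, hc⟩ := CharacterModule.exists_character_apply_ne_zero_of_ne_zero hxN
  let ψ : A →+ AddCircle (1 : ℚ) := AddMonoidHom.comp c (QuotientAddGroup.mk' N)
  have hψ (y : A) : ψ y ∈ (ZMod.toRatCircle n).range := by
    refine ZMod.mem_range_toRatCircle ?_
    have hyN : ((n • y : A) : A ⧸ N) = 0 := (QuotientAddGroup.eq_zero_iff _).mpr ⟨y, rfl⟩
    rw [← map_nsmul]
    exact (congrArg c hyN).trans (map_zero c)
  let ι := AddMonoidHom.ofInjective (ZMod.toRatCircle_injective n)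
  refine ⟨(ι.symm : _ →+ ZMod n).comp (ψ.codRestrict _ hψ), fun h0 => hc ?_⟩
  have hψx : ψ x = 0 := by simpa using congrArg (fun j => (ι j : AddCircle (1 : ℚ))) h0
  exact hψx

section SymSquare

variable {A : Type*} [AddCommGroup A] {m : ℕ}

variable (A m) in
noncomputable def toSymSquareModM : A ⊗[ℤ] A →ₗ[ℤ] symSquareModM A m :=
  (Submodule.mkQ _).comp (Submodule.mkQ _)

theorem tauThree_eq_nsmul (a : A) :
    tauThree A m a = m.choose 2 • toSymSquareModM A m (a ⊗ₜ a) := by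
  rw [← map_nsmul]
  rfl

theorem symSquareModM.nsmul_eq_zero (s : symSquareModM A m) : m • s = 0 := by
  induction s using Submodule.Quotient.induction_on with
  | _ y =>
    rw [← Submodule.Quotient.mk_smul, Submodule.Quotient.mk_eq_zero]
    exact Submodule.subset_span ⟨y, rfl⟩

theorem toSymSquareModM_tmul_comm (x y : A) :
    toSymSquareModM A m (x ⊗ₜ y) = toSymSquareModM A m (y ⊗ₜ x) :=
  congrArg (Submodule.mkQ _) ((Submodule.Quotient.eq _).mpr (Submodule.subset_span ⟨x, y, rfl⟩))

theorem tauThree_add (a b : A) : tauThree A m (a + b) = tauThree A m a + tauThree A m b := by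
  set π := toSymSquareModM A m
  have hcross : m.choose 2 • (π (a ⊗ₜ b) + π (b ⊗ₜ a)) = 0 := by
    rw [toSymSquareModM_tmul_comm b a, ← two_nsmul, smul_smul, mul_comm,
      Nat.two_mul_choose_two, mul_smul, symSquareModM.nsmul_eq_zero]
  simp only [tauThree_eq_nsmul, add_tmul, tmul_add, map_add, smul_add] at hcross ⊢
  rw [← sub_eq_zero, ← hcross]
  abel

theorem tauThree_of_odd (hm : Odd m) (a : A) : tauThree A m a = 0 := by
  obtain ⟨j, rfl⟩ := hm
  rw [tauThree_eq_nsmul, Nat.choose_two_two_mul_add_one, mul_smul, symSquareModM.nsmul_eq_zero]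

theorem tauThree_two_mul (k : ℕ) (a : A) :
    tauThree A (2 * k) a = -(k • toSymSquareModM A (2 * k) (a ⊗ₜ a)) := by
  rw [tauThree_eq_nsmul, eq_neg_iff_add_eq_zero, ← add_smul, Nat.choose_two_two_mul_add_self,
    mul_smul, symSquareModM.nsmul_eq_zero]

variable (m) in
noncomputable def symSquareModM.mulForm (χ : A →+ ZMod m) : symSquareModM A m →ₗ[ℤ] ZMod m :=
  let β := TensorProduct.lift
    ((LinearMap.mul ℤ (ZMod m)).compl₁₂ χ.toIntLinearMap χ.toIntLinearMap)
  have hβ : Submodule.span ℤ {x : A ⊗[ℤ] A | ∃ a b : A, x = a ⊗ₜ[ℤ] b - b ⊗ₜ[ℤ] a} ≤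
      LinearMap.ker β := Submodule.span_le.mpr (by
    rintro _ ⟨x, y, rfl⟩
    change β (x ⊗ₜ y - y ⊗ₜ x) = 0
    rw [map_sub, sub_eq_zero]
    exact mul_comm (χ x) (χ y))
  Submodule.liftQ _ (Submodule.liftQ _ β hβ) (Submodule.span_le.mpr (by
    rintro _ ⟨s, rfl⟩
    simp [nsmul_eq_mul]))

theorem symSquareModM.mulForm_toSymSquareModM (χ : A →+ ZMod m) (x y : A) :
    mulForm m χ (toSymSquareModM A m (x ⊗ₜ y)) = χ x * χ y :=
  rfl

theorem tauThree_two_mul_eq_zero_iff {k : ℕ} {a : A} :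
    tauThree A (2 * k) a = 0 ↔ ∃ b : A, k • a = (2 * k) • b := by
  rw [tauThree_two_mul, neg_eq_zero, ← map_nsmul, smul_tmul']
  constructor
  · intro h
    obtain rfl | hk := eq_or_ne k 0
    · exact ⟨0, by simp⟩
    have : NeZero (2 * k) := ⟨by omega⟩
    by_contra! hka
    obtain ⟨χ, hχ⟩ := exists_addMonoidHom_zmod_apply_ne_zero hka
    apply hχ
    calc χ (k • a) = k * (χ a * χ a) := by
          rw [map_nsmul, nsmul_eq_mul, ZMod.natCast_mul_mul_self_of_two_mul]
      _ = symSquareModM.mulForm (2 * k) χ (toSymSquareModM A (2 * k) ((k • a) ⊗ₜ a)) := by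
          rw [symSquareModM.mulForm_toSymSquareModM, map_nsmul, nsmul_eq_mul, mul_assoc]
      _ = 0 := by rw [h, map_zero]
  · rintro ⟨b, hb⟩
    rw [hb, ← smul_tmul', map_nsmul, symSquareModM.nsmul_eq_zero]

end SymSquare

theorem exists_nsmul_eq_iff_exists_add {A : Type*} [AddCommGroup A] {k : ℕ} {a : A}
    (ha : (2 * k) • a = 0) : (∃ b : A, k • a = (2 * k) • b) ↔
      ∃ b c : A, (2 * k) • (2 • b) = 0 ∧ k • c = 0 ∧ a = 2 • b + c := by
  constructor
  · rintro ⟨b, hb⟩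
    refine ⟨b, a - 2 • b, ?_, ?_, by abel⟩
    · rw [smul_comm, ← hb, smul_smul, ha]
    · rw [smul_sub, hb, smul_smul, mul_comm, sub_self]
  · rintro ⟨b, c, -, hc, rfl⟩
    exact ⟨b, by rw [smul_add, hc, add_zero, smul_smul, mul_comm]⟩

/-- **Lemma 2.8**: `τ₃` is a homomorphism on `A_(m) = {a | m•a = 0}`, its kernel is all
of `A_(m)` if `m` is odd, and equals `(A_(m) ∩ 2A) + A_(m/2)` if `m` is even. -/
theorem tauThree_hom_and_kernel (A : Type*) [AddCommGroup A] (m : ℕ) :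
    (∀ a b : A, m • a = 0 → m • b = 0 →
      tauThree A m (a + b) = tauThree A m a + tauThree A m b) ∧
    (Odd m → ∀ a : A, m • a = 0 → tauThree A m a = 0) ∧
    (Even m → ∀ a : A, m • a = 0 →
      (tauThree A m a = 0 ↔
        ∃ b c : A, m • (2 • b) = 0 ∧ (m / 2) • c = 0 ∧ a = 2 • b + c)) := by
  refine ⟨fun a b _ _ => tauThree_add a b, fun hm a _ => tauThree_of_odd hm a, ?_⟩
  rintro ⟨k, rfl⟩ a ha
  rw [← two_mul] at ha ⊢
  rw [tauThree_two_mul_eq_zero_iff, Nat.mul_div_cancel_left k two_pos,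
    exists_nsmul_eq_iff_exists_add ha]
end

section
/- Let G be a group, H a subgroup of G, and R a commutative ring with unit of characteristic 0. Then G ∩ (1_R + I_R(G)I_R(H)) = {g ∈ G : g − 1 ∈ I_R(G)I_R(H)} equals the subgroup of H generated by H₂ = [H,H] together with, for each prime p ∈ σ(R), the p^{e(p)}-th powers of the elements of t_p(H mod H₂) = {h ∈ H : h^{p^k} ∈ H₂ for some k ≥ 0}. -/
open MonoidAlgebra

/-- The `R`-submodule `I_R(G)·I_R(H)` of `R(G)` spanned by the products
`(g-1)(h-1)` with `g ∈ G`, `h ∈ H`. -/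
noncomputable def augMulGH (R : Type*) [CommRing R] {G : Type*} [Group G]
    (H : Subgroup G) : Submodule R (MonoidAlgebra R G) :=
  Submodule.span R {x | ∃ g : G, ∃ h ∈ H, x = (of R G g - 1) * (of R G h - 1)}

/-- `p ∈ σ(R)`: `p` is prime and `p^n·R = p^{n+1}·R` for some `n ≥ 0`. -/
def inSigma (R : Type*) [CommRing R] (p : ℕ) : Prop :=
  p.Prime ∧ ∃ n : ℕ, Ideal.span {((p : R) ^ n)} = Ideal.span {((p : R) ^ (n + 1))}

/-- For `p ∈ σ(R)`, `e(p)` is the smallest `n` with `p^n·R = p^{n+1}·R`. -/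
noncomputable def sigmaExp (R : Type*) [CommRing R] (p : ℕ) : ℕ :=
  sInf {n : ℕ | Ideal.span {((p : R) ^ n)} = Ideal.span {((p : R) ^ (n + 1))}}

open TensorProduct
open scoped commutatorElement

/-!
Membership `g - 1 ∈ I_R(G)I_R(H)` is tested by `R`-linear maps out of `R(G)` that kill every
`(g - 1)(h - 1)`, i.e. by maps `v : G → V` with `v(gh) - v(g) = v(h) - v(1)` for `h ∈ H`.
Projecting to `R(G/H)` forces `g ∈ H`; a map `θ : G → H^ab` with `θ(gh) = θ(g) + [h]` then shows
that `1 ⊗ [g] = 0` in `R ⊗_ℤ H^ab`. In an abelian group, `1 ⊗ a = 0` already holds in a finitely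
generated subgroup, so by the structure theorem it suffices to treat `ℤ` (excluded by
characteristic `0`) and `ℤ/p^m`, where `R ⊗ ℤ/p^m = R/p^m R`. If `c ∈ p^m R` but `p^m ∤ c`, then
`p^s = gcd(c, p^m) ∈ p^m R ⊆ p^(s+1) R`, so `p ∈ σ(R)` and `p^e(p) ∣ c`.

Conversely `[H, H]` lies in the Fox subgroup and `h^m - 1 ≡ m(h - 1)` modulo `I_R(G)I_R(H)`, so
`h^(p^k) ∈ [H, H]` gives `p^k (h - 1) ∈ I_R(G)I_R(H)`; as `p^e(p) ∈ p^k R`, also `h^(p^e(p))`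
belongs to it.
-/

theorem Ideal.span_singleton_pow_le_of_span_singleton_pow_eq_succ {S : Type*} [CommSemiring S]
    {x : S} {n : ℕ} (h : Ideal.span {x ^ n} = Ideal.span {x ^ (n + 1)}) (k : ℕ) :
    Ideal.span {x ^ n} ≤ Ideal.span {x ^ k} := by
  have stable : ∀ j, Ideal.span {x ^ n} = Ideal.span {x ^ (n + j)} := by
    intro j
    induction j with
    | zero => rfl
    | succ j ih =>
      rw [← add_assoc, pow_succ, ← Ideal.span_singleton_mul_span_singleton, ← ih,
        Ideal.span_singleton_mul_span_singleton, ← pow_succ, h]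
  rw [stable k]
  exact Ideal.span_singleton_le_span_singleton.mpr (pow_dvd_pow x (Nat.le_add_left k n))

section Sigma
variable {R : Type*} [CommRing R]

theorem sigmaExp_spec {p : ℕ} (hp : inSigma R p) :
    Ideal.span {(p : R) ^ sigmaExp R p} = Ideal.span {(p : R) ^ (sigmaExp R p + 1)} :=
  Nat.sInf_mem hp.2

theorem pow_sigmaExp_mem_span_pow {p : ℕ} (hp : inSigma R p) (k : ℕ) :
    (p : R) ^ sigmaExp R p ∈ Ideal.span {(p : R) ^ k} :=
  Ideal.span_singleton_pow_le_of_span_singleton_pow_eq_succ (sigmaExp_spec hp) k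
    (Ideal.mem_span_singleton_self _)

variable (R) in
def sigmaTorsionSubgroup (A : Type*) [AddCommGroup A] : AddSubgroup A :=
  AddSubgroup.closure (⋃ p ∈ {p : ℕ | inSigma R p},
    {x : A | ∃ b : A, (∃ k : ℕ, p ^ k • b = 0) ∧ x = p ^ sigmaExp R p • b})

theorem map_mem_sigmaTorsionSubgroup {A B : Type*} [AddCommGroup A] [AddCommGroup B]
    (f : A →+ B) {a : A} (ha : a ∈ sigmaTorsionSubgroup R A) : f a ∈ sigmaTorsionSubgroup R B := by
  suffices sigmaTorsionSubgroup R A ≤ (sigmaTorsionSubgroup R B).comap f from this ha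
  rw [sigmaTorsionSubgroup, AddSubgroup.closure_le]
  simp only [Set.iUnion_subset_iff]
  rintro p hp _ ⟨b, ⟨k, hk⟩, rfl⟩
  refine AddSubgroup.subset_closure (Set.mem_biUnion hp ⟨f b, ⟨k, ?_⟩, map_nsmul f _ b⟩)
  rw [← map_nsmul, hk, map_zero]

theorem dvd_or_inSigma_of_intCast_mem_span_pow {p m : ℕ} (hp : p.Prime) {c : ℤ}
    (hc : (c : R) ∈ Ideal.span {(p : R) ^ m}) :
    (p : ℤ) ^ m ∣ c ∨ (inSigma R p ∧ (p : ℤ) ^ sigmaExp R p ∣ c) := by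
  set d := Int.gcd c ((p : ℤ) ^ m)
  have hdc : (d : ℤ) ∣ c := Int.gcd_dvd_left _ _
  obtain ⟨s, hsm, hds⟩ : ∃ s ≤ m, d = p ^ s := by
    rw [← Nat.dvd_prime_pow hp]
    exact_mod_cast (Int.gcd_dvd_right _ _ : (d : ℤ) ∣ (p : ℤ) ^ m)
  have hdR : (p : R) ^ s ∈ Ideal.span {(p : R) ^ m} := by
    have bezout : ((d : ℤ) : R) = c * (c.gcdA ((p : ℤ) ^ m) : R)
        + (p : R) ^ m * (c.gcdB ((p : ℤ) ^ m) : R) := by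
      rw [Int.gcd_eq_gcd_ab]; push_cast; ring
    rw [hds] at bezout
    push_cast at bezout
    rw [bezout]
    exact add_mem (Ideal.mul_mem_right _ _ hc)
      (Ideal.mul_mem_right _ _ (Ideal.mem_span_singleton_self _))
  rcases hsm.lt_or_eq with hsm | rfl
  · have hspan : Ideal.span {(p : R) ^ s} = Ideal.span {(p : R) ^ (s + 1)} :=
      le_antisymm
        ((Ideal.span_singleton_le_iff_mem _).mpr
          (Ideal.span_singleton_le_span_singleton.mpr (pow_dvd_pow _ hsm) hdR))
        (Ideal.span_singleton_le_span_singleton.mpr (pow_dvd_pow _ s.le_succ))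
    refine Or.inr ⟨⟨hp, s, hspan⟩, dvd_trans ?_ hdc⟩
    rw [hds]; push_cast
    exact pow_dvd_pow _ (Nat.sInf_le hspan)
  · left; rw [hds] at hdc; exact_mod_cast hdc

theorem apply_eq_zero_of_one_tmul_eq_zero {A V : Type*} [AddCommGroup A] [AddCommGroup V]
    [Module R V] {a : A} (h : (1 : R) ⊗ₜ[ℤ] a = 0) (φ : A →+ V) : φ a = 0 := by
  simpa using congrArg (φ.toIntLinearMap.liftBaseChange R) h

theorem mem_sigmaTorsionSubgroup_of_one_tmul_eq_zero_of_cyclic {q : ℤ} (hq : Prime q) (m : ℕ)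
    {c : ℤ ⧸ Submodule.span ℤ {q ^ m}} (h : (1 : R) ⊗ₜ[ℤ] c = 0) :
    c ∈ sigmaTorsionSubgroup R (ℤ ⧸ Submodule.span ℤ {q ^ m}) := by
  obtain ⟨c, rfl⟩ := Submodule.Quotient.mk_surjective _ c
  set p := q.natAbs
  have hp : p.Prime := Int.prime_iff_natAbs_prime.mp hq
  have hzero : ∀ x : ℤ, (Submodule.Quotient.mk x : ℤ ⧸ Submodule.span ℤ {q ^ m}) = 0 ↔
      (p : ℤ) ^ m ∣ x := by
    intro x
    rw [Submodule.Quotient.mk_eq_zero, Ideal.mem_span_singleton, ← Int.natAbs_dvd, Int.natAbs_pow,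
      Nat.cast_pow]
  set J := Ideal.span {(p : R) ^ m}
  have hJ : ∀ x : ℤ, (p : ℤ) ^ m ∣ x → (x : R) ∈ J := by
    rintro _ ⟨y, rfl⟩
    push_cast
    exact Ideal.mul_mem_right _ _ (Ideal.mem_span_singleton_self _)
  have hcR : (c : R) ∈ J := by
    let φ₀ : ℤ →ₗ[ℤ] R ⧸ J := (J.mkQ.restrictScalars ℤ).comp (Algebra.linearMap ℤ R)
    have hφ₀ : ∀ x : ℤ, φ₀ x = 0 ↔ (x : R) ∈ J := fun x => by
      simp only [φ₀, LinearMap.coe_comp, Function.comp_apply, Algebra.linearMap_apply, eq_intCast,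
        LinearMap.coe_restrictScalars, Submodule.mkQ_apply, Submodule.Quotient.mk_eq_zero]
    let φ := (Submodule.span ℤ {q ^ m}).liftQ φ₀ <| by
      rw [Submodule.span_le, Set.singleton_subset_iff]
      exact (hφ₀ _).mpr (hJ _ (pow_dvd_pow_of_dvd (Int.natAbs_dvd.mpr dvd_rfl) m))
    exact (hφ₀ c).mp (apply_eq_zero_of_one_tmul_eq_zero h φ.toAddMonoidHom)
  rcases dvd_or_inSigma_of_intCast_mem_span_pow hp hcR with hdvd | ⟨hσ, d, rfl⟩
  · rw [(hzero c).mpr hdvd]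
    exact zero_mem _
  · refine AddSubgroup.subset_closure (Set.mem_biUnion hσ ⟨Submodule.Quotient.mk d, ⟨m, ?_⟩, ?_⟩)
    · rw [← Submodule.Quotient.mk_smul, hzero, nsmul_eq_mul]
      push_cast
      exact dvd_mul_right _ _
    · rw [← Submodule.Quotient.mk_smul, nsmul_eq_mul]
      push_cast
      rfl

theorem one_tmul_map_eq_zero {A B : Type*} [AddCommGroup A] [AddCommGroup B] {a : A}
    (h : (1 : R) ⊗ₜ[ℤ] a = 0) (f : A →+ B) : (1 : R) ⊗ₜ[ℤ] f a = 0 := by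
  simpa using congrArg (f.toIntLinearMap.lTensor R) h

theorem mem_sigmaTorsionSubgroup_of_one_tmul_eq_zero_of_finite [CharZero R] {A : Type*}
    [AddCommGroup A] [Module.Finite ℤ A] {a : A} (h : (1 : R) ⊗ₜ[ℤ] a = 0) :
    a ∈ sigmaTorsionSubgroup R A := by
  classical
  obtain ⟨n, ι, _, q, hq, e, ⟨E⟩⟩ := Module.equiv_free_prod_directSum (R := ℤ) (M := A)
  have hE : (1 : R) ⊗ₜ[ℤ] E a = 0 := one_tmul_map_eq_zero h E.toAddMonoidHom
  have hfree : (E a).1 = 0 := by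
    ext j
    exact Int.cast_eq_zero.mp <| apply_eq_zero_of_one_tmul_eq_zero hE
      ((Int.castAddHom R).comp ((Finsupp.applyAddHom j).comp (AddMonoidHom.fst _ _)))
  have htors : (E a).2 ∈ sigmaTorsionSubgroup R _ := by
    rw [← DirectSum.sum_univ_of (E a).2]
    refine sum_mem fun i _ =>
      map_mem_sigmaTorsionSubgroup (DirectSum.of (fun i => ℤ ⧸ ℤ ∙ q i ^ e i) i) ?_
    exact mem_sigmaTorsionSubgroup_of_one_tmul_eq_zero_of_cyclic (hq i).prime (e i) <|
      one_tmul_map_eq_zero hE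
        ((DirectSum.component ℤ ι _ i).toAddMonoidHom.comp (AddMonoidHom.snd _ _))
  have hEa : E a ∈ sigmaTorsionSubgroup R _ := by
    rw [show E a = (0, (E a).2) from Prod.ext hfree rfl]
    exact map_mem_sigmaTorsionSubgroup (AddMonoidHom.inr (Fin n →₀ ℤ) _) htors
  simpa using map_mem_sigmaTorsionSubgroup E.symm.toAddMonoidHom hEa

theorem mem_sigmaTorsionSubgroup_of_one_tmul_eq_zero [CharZero R] {A : Type*} [AddCommGroup A]
    {a : A} (h : (1 : R) ⊗ₜ[ℤ] a = 0) : a ∈ sigmaTorsionSubgroup R A := by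
  have ha : a ∈ Submodule.span ℤ {a} := Submodule.mem_span_singleton_self a
  obtain ⟨Q, hPQ, hQ, hQa⟩ := TensorProduct.eq_zero_of_fg_of_subtype_eq_zero
    (Submodule.fg_span_singleton a) (t := (⟨a, ha⟩ : Submodule.span ℤ {a}) ⊗ₜ[ℤ] (1 : R))
    (by simpa using congrArg (TensorProduct.comm ℤ R A) h)
  have : Module.Finite ℤ Q := Module.Finite.iff_fg.mpr hQ
  have hQa' : (1 : R) ⊗ₜ[ℤ] Submodule.inclusion hPQ ⟨a, ha⟩ = 0 := by
    simpa only [LinearMap.rTensor_tmul, TensorProduct.comm_tmul, map_zero]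
      using congrArg (TensorProduct.comm ℤ Q R) hQa
  exact map_mem_sigmaTorsionSubgroup Q.subtype.toAddMonoidHom
    (mem_sigmaTorsionSubgroup_of_one_tmul_eq_zero_of_finite hQa')

end Sigma

section FoxSubgroup
variable (R : Type*) [CommRing R] {G : Type*} [Group G] (H : Subgroup G)

theorem sub_one_mul_sub_one_mem_augMulGH (g : G) {h : G} (hh : h ∈ H) :
    (of R G g - 1) * (of R G h - 1) ∈ augMulGH R H :=
  Submodule.subset_span ⟨g, h, hh, rfl⟩

variable {R H}

theorem of_mul_mem_augMulGH {x : MonoidAlgebra R G} (hx : x ∈ augMulGH R H) (g : G) :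
    of R G g * x ∈ augMulGH R H := by
  induction hx using Submodule.span_induction with
  | mem y hy =>
    obtain ⟨g', h, hh, rfl⟩ := hy
    have : of R G g * ((of R G g' - 1) * (of R G h - 1)) =
        (of R G (g * g') - 1) * (of R G h - 1) - (of R G g - 1) * (of R G h - 1) := by
      rw [map_mul]; noncomm_ring
    rw [this]
    exact sub_mem (sub_one_mul_sub_one_mem_augMulGH R H _ hh)
      (sub_one_mul_sub_one_mem_augMulGH R H _ hh)
  | zero => rw [mul_zero]; exact zero_mem _
  | add y z _ _ hy hz => rw [mul_add]; exact add_mem hy hz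
  | smul r y _ hy => rw [mul_smul_comm]; exact Submodule.smul_mem _ r hy

theorem mul_of_mem_augMulGH {x : MonoidAlgebra R G} (hx : x ∈ augMulGH R H) {h : G}
    (hh : h ∈ H) : x * of R G h ∈ augMulGH R H := by
  induction hx using Submodule.span_induction with
  | mem y hy =>
    obtain ⟨g, h', hh', rfl⟩ := hy
    have : (of R G g - 1) * (of R G h' - 1) * of R G h =
        (of R G g - 1) * (of R G (h' * h) - 1) - (of R G g - 1) * (of R G h - 1) := by
      rw [map_mul]; noncomm_ring
    rw [this]
    exact sub_mem (sub_one_mul_sub_one_mem_augMulGH R H _ (mul_mem hh' hh))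
      (sub_one_mul_sub_one_mem_augMulGH R H _ hh)
  | zero => rw [zero_mul]; exact zero_mem _
  | add y z _ _ hy hz => rw [add_mul]; exact add_mem hy hz
  | smul r y _ hy => rw [smul_mul_assoc]; exact Submodule.smul_mem _ r hy

variable (R H)

noncomputable def foxSubgroup : Subgroup G where
  carrier := {g | of R G g - 1 ∈ augMulGH R H}
  one_mem' := by
    rw [Set.mem_ofPred_eq, map_one, sub_self]
    exact zero_mem _
  mul_mem' {a b} ha hb := by
    have : of R G (a * b) - 1 = of R G a * (of R G b - 1) + (of R G a - 1) := by
      rw [map_mul]; noncomm_ring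
    rw [Set.mem_ofPred_eq, this]
    exact add_mem (of_mul_mem_augMulGH hb a) ha
  inv_mem' {a} ha := by
    have : of R G a⁻¹ - 1 = -(of R G a⁻¹ * (of R G a - 1)) := by
      rw [mul_sub, ← map_mul, inv_mul_cancel, map_one]; noncomm_ring
    rw [Set.mem_ofPred_eq, this]
    exact neg_mem (of_mul_mem_augMulGH ha a⁻¹)

theorem mem_foxSubgroup {g : G} : g ∈ foxSubgroup R H ↔ of R G g - 1 ∈ augMulGH R H :=
  Iff.rfl

theorem commutator_le_foxSubgroup : ⁅H, H⁆ ≤ foxSubgroup R H := by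
  rw [Subgroup.commutator_le]
  intro a ha b hb
  have key : of R G ⁅a, b⁆ - 1 =
      ((of R G a - 1) * (of R G b - 1) - (of R G b - 1) * (of R G a - 1)) *
        of R G (a⁻¹ * b⁻¹) := by
    have hba : b * a * (a⁻¹ * b⁻¹) = 1 := by group
    rw [show (of R G a - 1) * (of R G b - 1) - (of R G b - 1) * (of R G a - 1) =
        of R G a * of R G b - of R G b * of R G a by noncomm_ring, sub_mul, ← map_mul,
      ← map_mul, ← map_mul, ← map_mul, hba, map_one, commutatorElement_def, mul_assoc (a * b)]
  rw [mem_foxSubgroup, key]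
  exact mul_of_mem_augMulGH (sub_mem (sub_one_mul_sub_one_mem_augMulGH R H _ hb)
    (sub_one_mul_sub_one_mem_augMulGH R H _ ha)) (mul_mem (inv_mem ha) (inv_mem hb))

variable {H}

theorem of_pow_sub_one_sub_nsmul_mem_augMulGH {h : G} (hh : h ∈ H) (m : ℕ) :
    of R G (h ^ m) - 1 - m • (of R G h - 1) ∈ augMulGH R H := by
  induction m with
  | zero => rw [pow_zero, map_one, zero_smul, sub_self, sub_zero]; exact zero_mem _
  | succ m ih =>
    have : of R G (h ^ (m + 1)) - 1 - (m + 1) • (of R G h - 1) =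
        (of R G h - 1) * (of R G (h ^ m) - 1) + (of R G (h ^ m) - 1 - m • (of R G h - 1)) := by
      rw [pow_succ', map_mul, succ_nsmul]; noncomm_ring
    rw [this]
    exact add_mem (sub_one_mul_sub_one_mem_augMulGH R H _ (pow_mem hh m)) ih

theorem pow_mem_foxSubgroup_iff {h : G} (hh : h ∈ H) (m : ℕ) :
    h ^ m ∈ foxSubgroup R H ↔ m • (of R G h - 1) ∈ augMulGH R H := by
  have := of_pow_sub_one_sub_nsmul_mem_augMulGH R hh m
  rw [mem_foxSubgroup]
  constructor
  · intro hm
    simpa using sub_mem hm this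
  · intro hm
    simpa using add_mem this hm

variable {R}

theorem pow_sigmaExp_mem_foxSubgroup {p : ℕ} (hp : inSigma R p) {h : G} (hh : h ∈ H) {k : ℕ}
    (hk : h ^ p ^ k ∈ ⁅H, H⁆) : h ^ p ^ sigmaExp R p ∈ foxSubgroup R H := by
  have hpk := (pow_mem_foxSubgroup_iff R hh _).mp (commutator_le_foxSubgroup R H hk)
  obtain ⟨r, hr⟩ := Ideal.mem_span_singleton'.mp (pow_sigmaExp_mem_span_pow hp k)
  rw [pow_mem_foxSubgroup_iff R hh, ← Nat.cast_smul_eq_nsmul R, Nat.cast_pow, ← hr,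
    mul_smul, ← Nat.cast_pow, Nat.cast_smul_eq_nsmul R]
  exact Submodule.smul_mem _ r hpk

end FoxSubgroup

theorem Subgroup.exists_apply_mul_eq_apply_mul {G M : Type*} [Group G] [Monoid M]
    {H : Subgroup G} (f : H →* M) : ∃ θ : G → M, ∀ (g : G) (h : H), θ (g * h) = θ g * f h := by
  refine ⟨fun g => f ⟨(g : G ⧸ H).out⁻¹ * g, QuotientGroup.eq.mp (QuotientGroup.out_eq' _)⟩,
    fun g h => ?_⟩
  rw [← map_mul]
  refine congrArg f (Subtype.ext ?_)
  simp only [Subgroup.coe_mul, QuotientGroup.mk_mul_of_mem g h.2, mul_assoc]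

section FoxSubgroupReverse
variable {R : Type*} [CommRing R] {G : Type*} [Group G] {H : Subgroup G}

theorem apply_eq_apply_one_of_mem_foxSubgroup {V : Type*} [AddCommGroup V] [Module R V] (v : G → V)
    (hv : ∀ g, ∀ h ∈ H, v (g * h) - v g = v h - v 1) {g : G} (hg : g ∈ foxSubgroup R H) :
    v g = v 1 := by
  let L := (MonoidAlgebra.basis G R).constr R v
  have hL : ∀ x, L (of R G x) = v x := (MonoidAlgebra.basis G R).constr_basis R v
  have hker : augMulGH R H ≤ LinearMap.ker L := by
    rw [augMulGH, Submodule.span_le]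
    rintro _ ⟨g', h, hh, rfl⟩
    rw [SetLike.mem_coe, LinearMap.mem_ker, show (of R G g' - 1) * (of R G h - 1) =
      of R G (g' * h) - of R G g' - (of R G h - of R G 1) by rw [map_mul, map_one]; noncomm_ring]
    simp only [map_sub, hL]
    rw [hv g' h hh, sub_self]
  have := hker hg
  rwa [LinearMap.mem_ker, ← map_one (of R G), map_sub, hL, hL, sub_eq_zero] at this

theorem mem_of_mem_foxSubgroup [Nontrivial R] {g : G} (hg : g ∈ foxSubgroup R H) : g ∈ H := by
  let v : G → G ⧸ H →₀ R := fun x => Finsupp.single (x : G ⧸ H) 1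
  have hv : ∀ x, ∀ h ∈ H, v (x * h) - v x = v h - v 1 := by
    intro x h hh
    have h1 := QuotientGroup.mk_mul_of_mem 1 hh
    rw [one_mul] at h1
    simp only [v]
    rw [QuotientGroup.mk_mul_of_mem x hh, h1, sub_self, sub_self]
  have := Finsupp.single_left_injective one_ne_zero (apply_eq_apply_one_of_mem_foxSubgroup v hv hg)
  simpa using QuotientGroup.eq.mp this

theorem one_tmul_abelianization_of_eq_zero_of_mem_foxSubgroup {g : G} (hg : g ∈ foxSubgroup R H)
    (hgH : g ∈ H) :
    (1 : R) ⊗ₜ[ℤ] Additive.ofMul (Abelianization.of (⟨g, hgH⟩ : H)) = 0 := by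
  obtain ⟨θ, hθ⟩ :=
    Subgroup.exists_apply_mul_eq_apply_mul (Abelianization.of : H →* Abelianization H)
  have hθ₁ : ∀ h : H, θ h = θ 1 * Abelianization.of h := fun h => by rw [← hθ, one_mul]
  let v : G → R ⊗[ℤ] Additive (Abelianization H) := fun x => (1 : R) ⊗ₜ Additive.ofMul (θ x)
  have hv : ∀ x, ∀ h ∈ H, v (x * h) - v x = v h - v 1 := by
    intro x h hh
    simp only [v]
    rw [hθ x ⟨h, hh⟩, hθ₁ ⟨h, hh⟩, ofMul_mul, ofMul_mul, tmul_add, tmul_add, add_sub_cancel_left,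
      add_sub_cancel_left]
  have := apply_eq_apply_one_of_mem_foxSubgroup v hv hg
  simp only [v] at this
  rwa [hθ₁ ⟨g, hgH⟩, ofMul_mul, tmul_add, add_eq_left] at this

end FoxSubgroupReverse

section Generators
variable (R : Type*) [CommRing R] {G : Type*} [Group G] (H : Subgroup G)

def foxGenerators : Set G :=
  (⁅H, H⁆ : Subgroup G) ∪ ⋃ p ∈ {p : ℕ | inSigma R p},
    {x : G | ∃ h ∈ H, (∃ k : ℕ, h ^ p ^ k ∈ (⁅H, H⁆ : Subgroup G)) ∧ x = h ^ p ^ sigmaExp R p}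

theorem closure_foxGenerators_le_foxSubgroup :
    Subgroup.closure (foxGenerators R H) ≤ foxSubgroup R H := by
  rw [Subgroup.closure_le]
  rintro x (hx | hx)
  · exact commutator_le_foxSubgroup R H hx
  · simp only [Set.mem_iUnion] at hx
    obtain ⟨p, hp, h, hh, ⟨k, hk⟩, rfl⟩ := hx
    exact pow_sigmaExp_mem_foxSubgroup hp hh hk

variable {R H}

theorem mem_closure_foxGenerators_of_mem_sigmaTorsionSubgroup {h : H}
    (hσ : Additive.ofMul (Abelianization.of h) ∈
      sigmaTorsionSubgroup R (Additive (Abelianization H))) :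
    (h : G) ∈ Subgroup.closure (foxGenerators R H) := by
  set K := (Subgroup.closure (foxGenerators R H)).subgroupOf H
  have hcomm : commutator H ≤ K := fun x hx => Subgroup.mem_subgroupOf.mpr <|
    Subgroup.subset_closure (Or.inl (H.map_subtype_commutator ▸ Subgroup.mem_map_of_mem _ hx))
  have hK : (K.map Abelianization.of).comap Abelianization.of = K := by
    rw [Subgroup.comap_map_eq, Abelianization.ker_of, sup_eq_left.mpr hcomm]
  suffices sigmaTorsionSubgroup R _ ≤ (K.map Abelianization.of).toAddSubgroup from
    Subgroup.mem_subgroupOf.mp (hK.le (this hσ))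
  rw [sigmaTorsionSubgroup, AddSubgroup.closure_le]
  simp only [Set.iUnion_subset_iff]
  rintro p hp _ ⟨b, ⟨k, hk⟩, rfl⟩
  obtain ⟨h₀, rfl⟩ : ∃ h₀ : H, Additive.ofMul (Abelianization.of h₀) = b :=
    QuotientGroup.mk_surjective (Additive.toMul b)
  have htors : (h₀ : G) ^ p ^ k ∈ ⁅H, H⁆ := by
    rw [← H.map_subtype_commutator, ← Abelianization.ker_of]
    refine ⟨h₀ ^ p ^ k, ?_, rfl⟩
    rw [SetLike.mem_coe, MonoidHom.mem_ker, map_pow, ← toMul_ofMul (Abelianization.of h₀),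
      ← toMul_nsmul, hk, toMul_zero]
  have hgen : h₀ ^ p ^ sigmaExp R p ∈ K :=
    Subgroup.subset_closure (Or.inr (Set.mem_biUnion hp ⟨h₀, h₀.2, ⟨k, htors⟩, rfl⟩))
  exact ⟨_, hgen, map_pow _ _ _⟩

end Generators

/-- **Proposition 3.2(1)**: if `R` has characteristic `0`, then
`G ∩ (1_R + I_R(G)I_R(H))` equals the subgroup generated by `H₂ = [H,H]` together with,
for each prime `p ∈ σ(R)`, the `p^{e(p)}`-th powers of the elements of
`t_p(H mod H₂) = {h ∈ H | h^{p^k} ∈ H₂ for some k}`. -/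
theorem first_fox_subgroup_char_zero (R : Type*) [CommRing R] [CharZero R]
    {G : Type*} [Group G] (H : Subgroup G) :
    {g : G | of R G g - 1 ∈ augMulGH R H} =
      ↑(Subgroup.closure ((⁅H, H⁆ : Subgroup G) ∪
        ⋃ p ∈ {p : ℕ | inSigma R p},
          {x : G | ∃ h ∈ H, (∃ k : ℕ, h ^ p ^ k ∈ (⁅H, H⁆ : Subgroup G)) ∧
            x = h ^ p ^ sigmaExp R p})) := by
  change (foxSubgroup R H : Set G) = Subgroup.closure (foxGenerators R H)
  refine le_antisymm (fun g hg => ?_) (closure_foxGenerators_le_foxSubgroup R H)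
  have hgH : g ∈ H := mem_of_mem_foxSubgroup hg
  exact mem_closure_foxGenerators_of_mem_sigmaTorsionSubgroup (h := ⟨g, hgH⟩) <|
    mem_sigmaTorsionSubgroup_of_one_tmul_eq_zero <|
      one_tmul_abelianization_of_eq_zero_of_mem_foxSubgroup hg hgH
end
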